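/- Let H and K be finite groups, let G = H × K, and let S be a Schur partition of G such that H × 1 and 1 × K are unions of blocks of S and every block of S contained in H × 1 is a singleton. Then S is the direct product partition H × S_K; that is, the blocks of S are exactly the sets {h} × D, where h ranges over H and D ranges over the blocks of S contained in 1 × K (identified with subsets of K). -/

import Mathlib

open scoped Pointwise

/-- The class sum of a subset `C` of a group `G` in the rational group algebra `ℚ[G]`. -/
noncomputable def classSum {G : Type*} [Group G] (C : Set G) : MonoidAlgebra ℚ G :=
  ∑ᶠ g ∈ C, MonoidAlgebra.single g (1 : ℚ)

/-- A Schur partition of a group `G`: a partition containing `{1}`, closed under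
pointwise inverses, whose class sums multiply with natural-number structure constants. -/
def IsSchurPartition {G : Type*} [Group G] (P : Set (Set G)) : Prop :=
  Setoid.IsPartition P ∧
  ({1} : Set G) ∈ P ∧
  (∀ C ∈ P, C⁻¹ ∈ P) ∧
  ∀ C ∈ P, ∀ D ∈ P,
    classSum C * classSum D ∈ AddSubmonoid.closure (classSum '' P)

/-- `A` is a union of blocks of the partition `P`: every block meeting `A` lies in `A`. -/
def IsBlockUnion {G : Type*} (P : Set (Set G)) (A : Set G) : Prop :=
  ∀ C ∈ P, (C ∩ A).Nonempty → A ⊇ C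

/-!
A block `{a}` of a Schur partition consists of a single element, and multiplying class sums
by `a` translates sets, so `a • B` is a union of blocks for every block `B`; translating back
by `a⁻¹` shows that `a • B` is itself a block. In `H × K` every `(h, 1)` is such an element.
A block `C` through `(h, k)` is therefore the translate by `(h, 1)` of the block through
`(1, k)`, which lies in `1 × K`.
-/

section ClassSum

variable {G : Type*} [Group G]

open Classical in
lemma coeff_classSum [Finite G] (C : Set G) (x : G) :
    (classSum C).coeff x = if x ∈ C then 1 else 0 := by
  rw [classSum, finsum_mem_eq_finite_toFinset_sum _ C.toFinite, MonoidAlgebra.coeff_sum,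
    Finsupp.finsetSum_apply]
  simp [MonoidAlgebra.coeff_single, Finsupp.single_apply]

lemma classSum_singleton (a : G) : classSum ({a} : Set G) = MonoidAlgebra.single a 1 := by
  simp [classSum]

lemma single_mul_classSum [Finite G] (a : G) (B : Set G) :
    MonoidAlgebra.single a (1 : ℚ) * classSum B = classSum (a • B) := by
  refine MonoidAlgebra.coeff_injective (Finsupp.ext fun x => ?_)
  rw [MonoidAlgebra.coeff_single_mul_apply, coeff_classSum, coeff_classSum, one_mul,
    Set.mem_smul_set_iff_inv_smul_mem, smul_eq_mul]

lemma coeff_eq_of_mem_closure_classSum [Finite G] {S : Set (Set G)}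
    (hP : Setoid.IsPartition S) {x : MonoidAlgebra ℚ G}
    (hx : x ∈ AddSubmonoid.closure (classSum '' S))
    {C : Set G} (hC : C ∈ S) {g g' : G} (hg : g ∈ C) (hg' : g' ∈ C) :
    x.coeff g = x.coeff g' := by
  induction hx using AddSubmonoid.closure_induction with
  | mem y hy =>
    obtain ⟨D, hD, rfl⟩ := hy
    have hgD : g ∈ D ↔ g' ∈ D :=
      ⟨fun h => Setoid.eq_of_mem_eqv_class hP.2 hC hg hD h ▸ hg',
        fun h => Setoid.eq_of_mem_eqv_class hP.2 hC hg' hD h ▸ hg⟩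
    rw [coeff_classSum, coeff_classSum]
    split_ifs <;> tauto
  | zero => simp
  | add a b _ _ ha hb => simp only [MonoidAlgebra.coeff_add, Finsupp.add_apply, ha, hb]

lemma isBlockUnion_of_classSum_mem_closure [Finite G] {S : Set (Set G)}
    (hP : Setoid.IsPartition S) {E : Set G}
    (hE : classSum E ∈ AddSubmonoid.closure (classSum '' S)) :
    IsBlockUnion S E := by
  rintro C hC ⟨g, hgC, hgE⟩ g' hg'C
  simpa [coeff_classSum, hgE] using coeff_eq_of_mem_closure_classSum hP hE hC hgC hg'C

end ClassSum

lemma Setoid.IsPartition.singleton_mem {α : Type*} {S : Set (Set α)}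
    (hP : Setoid.IsPartition S) {A : Set α} (hA : IsBlockUnion S A)
    (hdisc : ∀ C ∈ S, C ⊆ A → ∃ g, C = {g}) {a : α} (ha : a ∈ A) : ({a} : Set α) ∈ S := by
  obtain ⟨C, hC, haC⟩ := (hP.2 a).exists
  obtain ⟨g, rfl⟩ := hdisc C hC (hA C hC ⟨a, haC, ha⟩)
  rwa [Set.mem_singleton_iff.mp haC]

namespace IsSchurPartition

variable {G : Type*} [Group G] [Finite G] {S : Set (Set G)}

lemma isBlockUnion_smul (hS : IsSchurPartition S) {a : G} (ha : ({a} : Set G) ∈ S)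
    {B : Set G} (hB : B ∈ S) : IsBlockUnion S (a • B) := by
  have hmul := hS.2.2.2 _ ha B hB
  rw [classSum_singleton, single_mul_classSum] at hmul
  exact isBlockUnion_of_classSum_mem_closure hS.1 hmul

lemma smul_mem (hS : IsSchurPartition S) {a : G} (ha : ({a} : Set G) ∈ S)
    {B : Set G} (hB : B ∈ S) : a • B ∈ S := by
  have ha' : ({a⁻¹} : Set G) ∈ S := by simpa using hS.2.2.1 _ ha
  obtain ⟨b, hb⟩ := Setoid.nonempty_of_mem_partition hS.1 hB
  obtain ⟨C, hC, habC⟩ := (hS.1.2 (a * b)).exists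
  have hCB : C ⊆ a • B := hS.isBlockUnion_smul ha hB C hC ⟨a * b, habC, b, hb, rfl⟩
  have hBC : B ⊆ a⁻¹ • C :=
    hS.isBlockUnion_smul ha' hC B hB ⟨b, hb, a * b, habC, by simp [smul_eq_mul]⟩
  have haBC : a • B ⊆ C := by
    simpa [Set.smul_set_subset_iff_subset_inv_smul_set] using hBC
  exact (hCB.antisymm haBC) ▸ hC

end IsSchurPartition

lemma smul_mk_one_eq_image {H K : Type*} [Group H] [Group K] {D : Set (H × K)}
    (hD : D ⊆ {g | g.1 = 1}) (h : H) :
    ((h, 1) : H × K) • D = (fun k : K => (h, k)) '' (Prod.snd '' D) := by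
  ext x
  constructor
  · rintro ⟨d, hdD, rfl⟩
    exact ⟨d.2, ⟨d, hdD, rfl⟩, by simpa [smul_eq_mul, Prod.ext_iff] using hD hdD⟩
  · rintro ⟨k, ⟨d, hdD, rfl⟩, rfl⟩
    exact ⟨d, hdD, by simpa [smul_eq_mul, Prod.ext_iff] using hD hdD⟩

/-- If `S` is a Schur partition of `H × K` such that `H × 1` and `1 × K` are unions of
blocks of `S` and all blocks inside `H × 1` are singletons, then `S` is the direct
product partition: its blocks are the sets `{h} × D` for `h ∈ H` and `D` a block of `S`
inside `1 × K`. -/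
theorem schur_direct_product (H K : Type*) [Group H] [Group K] [Finite H] [Finite K]
    (S : Set (Set (H × K))) (hS : IsSchurPartition S)
    (hH : IsBlockUnion S {g : H × K | g.2 = 1})
    (hK : IsBlockUnion S {g : H × K | g.1 = 1})
    (hdisc : ∀ C ∈ S, C ⊆ {g : H × K | g.2 = 1} → ∃ g : H × K, C = {g}) :
    S = {C : Set (H × K) | ∃ (h : H) (D : Set (H × K)), D ∈ S ∧
          D ⊆ {g : H × K | g.1 = 1} ∧
          C = (fun k : K => (h, k)) '' (Prod.snd '' D)} := by
  have hsing (h : H) : ({((h, 1) : H × K)} : Set (H × K)) ∈ S :=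
    hS.1.singleton_mem hH hdisc rfl
  ext C
  constructor
  · intro hC
    obtain ⟨⟨h, k⟩, hhk⟩ := Setoid.nonempty_of_mem_partition hS.1 hC
    obtain ⟨D, hD, hkD⟩ := (hS.1.2 (1, k)).exists
    have hDK : D ⊆ {g : H × K | g.1 = 1} := hK D hD ⟨(1, k), hkD, rfl⟩
    have hhkD : ((h, k) : H × K) ∈ ((h, 1) : H × K) • D :=
      ⟨(1, k), hkD, by simp [smul_eq_mul]⟩
    have hCD : C = ((h, 1) : H × K) • D :=
      Setoid.eq_of_mem_eqv_class hS.1.2 hC hhk (hS.smul_mem (hsing h) hD) hhkD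
    exact ⟨h, D, hD, hDK, hCD.trans (smul_mk_one_eq_image hDK h)⟩
  · rintro ⟨h, D, hD, hDK, rfl⟩
    rw [← smul_mk_one_eq_image hDK h]
    exact hS.smul_mem (hsing h) hD
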